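/- arXiv:1910.04031 — 2 statements merged into one kernel-verified Lean document; each statement's English description precedes it below -/
import Mathlib

section
/- Let p ≥ 1, n ≥ 2p, and let g be a directed graph on {1,…,n} with exactly p edges, no loops, such that the 2p endpoints of the edges are pairwise distinct (each nontrivial connected component is a single edge with two vertices). If σ_n is a random permutation of {1,…,n} with conjugation-invariant distribution, then P(σ_n ∈ S_{n,g}) ≤ 1/( C(n−p, p) · p! ), where C(·,·) is the binomial coefficient. -/
/-!
For every injection `g` of the `p` labels into the complement of `{a i}`, the event
`∀ i, σ (a i) = g i` is the image of the event `∀ i, σ (a i) = b i` under conjugation by a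
permutation fixing each `a i` and sending `b i` to `g i`, so all these events have the same
probability. They are disjoint fibres of `σ ↦ σ ∘ a`, and there are `(n - p).descFactorial p`
of them, which bounds their common probability.
-/

open ENNReal

namespace PMF

variable {α β : Type*}

theorem toOuterMeasure_preimage_singleton (μ : PMF α) (f : α → β) (y : β) :
    μ.toOuterMeasure (f ⁻¹' {y}) = μ.map f y := by
  rw [← toOuterMeasure_map_apply, toOuterMeasure_apply_singleton]

theorem sum_toOuterMeasure_preimage_singleton_le_one {ι : Type*} [Fintype ι] (μ : PMF α)
    (f : α → β) {y : ι → β} (hy : Function.Injective y) :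
    ∑ i, μ.toOuterMeasure (f ⁻¹' {y i}) ≤ 1 := by
  classical
  simp only [toOuterMeasure_preimage_singleton]
  calc ∑ i, μ.map f (y i) = ∑ z ∈ Finset.univ.image y, μ.map f z :=
        (Finset.sum_image fun i _ j _ h => hy h).symm
    _ ≤ ∑' z, μ.map f z := ENNReal.sum_le_tsum _
    _ = 1 := (μ.map f).tsum_coe

end PMF

section ConjugationInvariant

variable {α : Type*} {ι : Type*}

def permsSending (x y : ι → α) : Set (Equiv.Perm α) := {σ | ∀ i, σ (x i) = y i}

theorem permsSending_eq_preimage (x y : ι → α) :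
    permsSending x y = (fun σ : Equiv.Perm α => ⇑σ ∘ x) ⁻¹' {y} := by
  ext σ
  simp [permsSending, funext_iff]

theorem toOuterMeasure_permsSending_perm_comp (μ : PMF (Equiv.Perm α))
    (hinv : ∀ τ : Equiv.Perm α, μ.map (fun σ => τ⁻¹ * σ * τ) = μ) (τ : Equiv.Perm α)
    (x y : ι → α) :
    μ.toOuterMeasure (permsSending (τ ∘ x) (τ ∘ y)) = μ.toOuterMeasure (permsSending x y) := by
  conv_rhs => rw [← hinv τ, PMF.toOuterMeasure_map_apply]
  congr 1
  ext σ
  simp only [permsSending, Set.mem_preimage, Set.mem_ofPred_eq, Function.comp_apply,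
    Equiv.Perm.mul_apply, Equiv.Perm.inv_eq_iff_eq]

theorem toOuterMeasure_permsSending_eq [Finite ι] (μ : PMF (Equiv.Perm α))
    (hinv : ∀ τ : Equiv.Perm α, μ.map (fun σ => τ⁻¹ * σ * τ) = μ) {x y x' y' : ι → α}
    (h : Function.Injective (Sum.elim x y)) (h' : Function.Injective (Sum.elim x' y')) :
    μ.toOuterMeasure (permsSending x' y') = μ.toOuterMeasure (permsSending x y) := by
  obtain ⟨τ, hτ⟩ := Equiv.Perm.exists_extending_pair _ _ h h'
  have hx : τ ∘ x = x' := funext fun i => hτ (Sum.inl i)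
  have hy : τ ∘ y = y' := funext fun i => hτ (Sum.inr i)
  rw [← hx, ← hy, toOuterMeasure_permsSending_perm_comp μ hinv]

end ConjugationInvariant

theorem stmt11_general {n p : ℕ}
    (a b : Fin p → Fin n)
    (hinj : Function.Injective (Sum.elim a b : Fin p ⊕ Fin p → Fin n))
    (μ : PMF (Equiv.Perm (Fin n)))
    (hinv : ∀ τ : Equiv.Perm (Fin n), μ.map (fun σ => τ⁻¹ * σ * τ) = μ) :
    μ.toOuterMeasure {σ | ∀ i : Fin p, σ (a i) = b i}
      ≤ 1 / (((n - p).choose p : ℝ≥0∞) * (p.factorial : ℝ≥0∞)) := by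
  classical
  have ha : Function.Injective a := hinj.comp Sum.inl_injective
  let y (g : Fin p ↪ ((Set.range a)ᶜ : Set (Fin n))) : Fin p → Fin n := Subtype.val ∘ g
  have hy : Function.Injective y := fun g g' h =>
    DFunLike.ext _ _ fun i => Subtype.ext (congrFun h i)
  have hsame (g : Fin p ↪ ((Set.range a)ᶜ : Set (Fin n))) :
      μ.toOuterMeasure (permsSending a (y g)) = μ.toOuterMeasure (permsSending a b) :=
    toOuterMeasure_permsSending_eq μ hinv hinj <|
      ha.sumElim (Subtype.val_injective.comp g.injective) fun i j h => (g j).2 ⟨i, h⟩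
  have hsum := PMF.sum_toOuterMeasure_preimage_singleton_le_one μ (fun σ => ⇑σ ∘ a) hy
  simp only [← permsSending_eq_preimage, hsame, Finset.sum_const, Finset.card_univ,
    nsmul_eq_mul] at hsum
  have hcard : Fintype.card (Fin p ↪ ((Set.range a)ᶜ : Set (Fin n)))
      = (n - p).choose p * p.factorial := by
    rw [Fintype.card_embedding_eq, Fintype.card_compl_set, Set.card_range_of_injective ha,
      Fintype.card_fin, Fintype.card_fin, Nat.descFactorial_eq_factorial_mul_choose, mul_comm]
  rw [hcard, Nat.cast_mul, mul_comm] at hsum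
  exact one_div (_ : ℝ≥0∞) ▸ ENNReal.le_inv_iff_mul_le.mpr hsum

theorem stmt11 {n p : ℕ} (hp : 1 ≤ p) (hn : 2 * p ≤ n)
    (a b : Fin p → Fin n)
    (hinj : Function.Injective (Sum.elim a b : Fin p ⊕ Fin p → Fin n))
    (μ : PMF (Equiv.Perm (Fin n)))
    (hinv : ∀ τ : Equiv.Perm (Fin n), μ.map (fun σ => τ⁻¹ * σ * τ) = μ) :
    μ.toOuterMeasure {σ | ∀ i : Fin p, σ (a i) = b i}
      ≤ 1 / (((n - p).choose p : ℝ≥0∞) * (p.factorial : ℝ≥0∞)) :=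
  stmt11_general a b hinj μ hinv
end

section
/- Let p ≥ 1, n ≥ 2p, and let g be a directed graph on {1,…,n} with exactly p edges whose 2p endpoints are pairwise distinct and with no loops. If σ_n is a random permutation of {1,…,n} with conjugation-invariant distribution, then P(σ_n ∈ S_{n,g}) ≥ (1 − (p²−p)/(n−1) − p·P(σ_n(1)=1)) / ( C(n−p, p)·p! ). -/
/-!
Conjugating by a permutation that fixes every `a i` and sends each `b i` to `c i` shows that
all events `{σ | ∀ i, σ (a i) = c i}` with `c` injective and avoiding `range a` have the same
probability; there are `(n - p).descFactorial p` of them. Their disjoint union is the event that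
`σ` maps `range a` into its complement, whose probability is at least
`1 - ∑ i j, P(σ (a i) = a j)`. By conjugation invariance the diagonal terms all equal the
fixed-point probability, and each off-diagonal term is at most `1 / (n - 1)` because the `n - 1`
disjoint events `σ x = z`, `z ≠ x`, are conjugate by transpositions fixing `x`.
-/

open ENNReal MeasureTheory Equiv Function
open Fintype (card)

namespace MeasureTheory.Measure

variable {α ι : Type*}

def IsConjInvariant [MeasurableSpace (Perm α)] (P : Measure (Perm α)) : Prop :=
  ∀ τ : Perm α, P.map (fun σ => τ⁻¹ * σ * τ) = P

namespace IsConjInvariant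

variable [MeasurableSpace (Perm α)] [DiscreteMeasurableSpace (Perm α)] {P : Measure (Perm α)}
  (hP : P.IsConjInvariant)
include hP

theorem measure_preimage_conj (τ : Perm α) (s : Set (Perm α)) :
    P ((fun σ => τ⁻¹ * σ * τ) ⁻¹' s) = P s := by
  rw [← Measure.map_apply .of_discrete .of_discrete, hP τ]

theorem measure_setOf_forall_apply_eq_conj (τ : Perm α) (c d : ι → α) :
    P {σ | ∀ i, σ (τ (c i)) = τ (d i)} = P {σ | ∀ i, σ (c i) = d i} := by
  rw [← hP.measure_preimage_conj τ {σ | ∀ i, σ (c i) = d i}]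
  congr 1
  ext σ
  simp [Perm.mul_apply, symm_apply_eq]

theorem measure_setOf_apply_eq_conj (τ : Perm α) (x y : α) :
    P {σ | σ (τ x) = τ y} = P {σ | σ x = y} := by
  rw [← hP.measure_preimage_conj τ {σ | σ x = y}]
  congr 1
  ext σ
  simp [Perm.mul_apply, symm_apply_eq]

theorem measure_setOf_forall_apply_eq_of_injective [Finite ι] {c d c' d' : ι → α}
    (h : Injective (Sum.elim c d)) (h' : Injective (Sum.elim c' d')) :
    P {σ | ∀ i, σ (c' i) = d' i} = P {σ | ∀ i, σ (c i) = d i} := by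
  obtain ⟨τ, hτ⟩ := Perm.exists_extending_pair _ _ h h'
  simp only [Sum.forall, Sum.elim_inl, Sum.elim_inr] at hτ
  simpa only [hτ.1, hτ.2] using hP.measure_setOf_forall_apply_eq_conj τ c d

theorem measure_setOf_apply_eq_self [DecidableEq α] (x y : α) :
    P {σ | σ x = x} = P {σ | σ y = y} := by
  simpa using hP.measure_setOf_apply_eq_conj (swap x y) y y

theorem measure_setOf_apply_eq_of_ne [DecidableEq α] {x y z : α} (hy : y ≠ x) (hz : z ≠ x) :
    P {σ | σ x = z} = P {σ | σ x = y} := by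
  simpa [swap_apply_of_ne_of_ne hy.symm hz.symm] using
    hP.measure_setOf_apply_eq_conj (swap y z) x y

variable [Fintype α] [Fintype ι] {a : ι → α}

theorem measure_setOf_forall_apply_notMem_range {b : ι → α} (hab : Injective (Sum.elim a b)) :
    P {σ | ∀ i, σ (a i) ∉ Set.range a}
      = (card α - card ι).descFactorial (card ι) * P {σ | ∀ i, σ (a i) = b i} := by
  classical
  have ha : Injective a := hab.comp Sum.inl_injective
  have hunion : {σ : Perm α | ∀ i, σ (a i) ∉ Set.range a}
      = ⋃ e : ι ↪ ((Set.range a)ᶜ : Set α), {σ | ∀ i, σ (a i) = (e i : α)} := by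
    ext σ
    simp only [Set.mem_ofPred_eq, Set.mem_iUnion]
    refine ⟨fun h => ?_, fun ⟨e, he⟩ i => he i ▸ (e i).2⟩
    exact ⟨⟨fun i => ⟨σ (a i), h i⟩, fun i j hij => ha (σ.injective (congrArg Subtype.val hij))⟩,
      fun i => rfl⟩
  have hdisj : Pairwise (Disjoint on
      fun e : ι ↪ ((Set.range a)ᶜ : Set α) => {σ : Perm α | ∀ i, σ (a i) = (e i : α)}) :=
    fun e e' hne => Set.disjoint_left.2 fun σ h h' =>
      hne (DFunLike.ext _ _ fun i => Subtype.ext ((h i).symm.trans (h' i)))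
  have hterm (e : ι ↪ ((Set.range a)ᶜ : Set α)) :
      P {σ | ∀ i, σ (a i) = (e i : α)} = P {σ | ∀ i, σ (a i) = b i} :=
    hP.measure_setOf_forall_apply_eq_of_injective hab <|
      ha.sumElim (Subtype.val_injective.comp e.injective) fun i j h => (e j).2 ⟨i, h⟩
  rw [hunion, measure_iUnion hdisj fun _ => .of_discrete, tsum_fintype,
    Finset.sum_congr rfl fun e _ => hterm e, Finset.sum_const, Finset.card_univ, nsmul_eq_mul,
    Fintype.card_embedding_eq, Fintype.card_compl_set, Set.card_range_of_injective ha]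

variable [IsProbabilityMeasure P]

theorem measure_setOf_apply_eq_le_of_ne {x y : α} (hxy : y ≠ x) :
    P {σ | σ x = y} ≤ ((card α - 1 : ℕ) : ℝ≥0∞)⁻¹ := by
  classical
  have hsum : ∑ z ∈ Finset.univ.erase x, P {σ | σ x = z} ≤ 1 :=
    (sum_measure_preimage_singleton _ fun _ _ => .of_discrete).trans_le prob_le_one
  rw [Finset.sum_congr rfl fun z hz =>
      hP.measure_setOf_apply_eq_of_ne hxy (Finset.ne_of_mem_erase hz), Finset.sum_const,
    Finset.card_erase_of_mem (Finset.mem_univ x), Finset.card_univ, nsmul_eq_mul] at hsum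
  rwa [ENNReal.le_inv_iff_mul_le, mul_comm]

theorem sum_measure_setOf_apply_eq_le (ha : Injective a) (i : ι) :
    ∑ j, P {σ | σ (a i) = a j}
      ≤ P {σ | σ (a i) = a i} + (card ι - 1 : ℕ) * ((card α - 1 : ℕ) : ℝ≥0∞)⁻¹ := by
  classical
  rw [← Finset.add_sum_erase _ _ (Finset.mem_univ i)]
  gcongr
  calc ∑ j ∈ Finset.univ.erase i, P {σ | σ (a i) = a j}
      ≤ ∑ j ∈ Finset.univ.erase i, ((card α - 1 : ℕ) : ℝ≥0∞)⁻¹ :=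
        Finset.sum_le_sum fun j hj =>
          hP.measure_setOf_apply_eq_le_of_ne (ha.ne (Finset.ne_of_mem_erase hj))
    _ = _ := by simp [Finset.card_erase_of_mem]

theorem measure_setOf_exists_apply_eq_le (ha : Injective a) (x : α) :
    P {σ | ∃ i j, σ (a i) = a j}
      ≤ ((card ι ^ 2 - card ι : ℕ) : ℝ≥0∞) / ((card α - 1 : ℕ) : ℝ≥0∞)
        + card ι * P {σ | σ x = x} := by
  classical
  have hsq : card ι ^ 2 - card ι = card ι * (card ι - 1) := by
    rw [sq, Nat.mul_sub_one]
  calc P {σ | ∃ i j, σ (a i) = a j} = P (⋃ i, ⋃ j, {σ | σ (a i) = a j}) := by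
        simp only [Set.ofPred_exists]
    _ ≤ ∑ i, ∑ j, P {σ | σ (a i) = a j} :=
        (measure_iUnion_fintype_le P _).trans
          (Finset.sum_le_sum fun i _ => measure_iUnion_fintype_le P _)
    _ ≤ ∑ _i : ι, (P {σ | σ x = x} + (card ι - 1 : ℕ) * ((card α - 1 : ℕ) : ℝ≥0∞)⁻¹) :=
        Finset.sum_le_sum fun i _ => by
          simpa only [hP.measure_setOf_apply_eq_self (a i) x] using
            hP.sum_measure_setOf_apply_eq_le ha i
    _ = _ := by
        rw [Finset.sum_const, Finset.card_univ, nsmul_eq_mul, hsq, div_eq_mul_inv]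
        push_cast
        ring

theorem one_sub_le_descFactorial_mul_measure {b : ι → α} (hab : Injective (Sum.elim a b)) (x : α) :
    1 - ((card ι ^ 2 - card ι : ℕ) : ℝ≥0∞) / ((card α - 1 : ℕ) : ℝ≥0∞)
        - card ι * P {σ | σ x = x}
      ≤ (card α - card ι).descFactorial (card ι)
        * P {σ | ∀ i, σ (a i) = b i} := by
  have hcompl : {σ : Perm α | ∀ i, σ (a i) ∉ Set.range a}ᶜ = {σ | ∃ i j, σ (a i) = a j} := by
    ext σ
    simp [eq_comm]
  rw [← hP.measure_setOf_forall_apply_notMem_range hab, tsub_tsub]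
  calc _ ≤ 1 - P {σ | ∃ i j, σ (a i) = a j} :=
        tsub_le_tsub_left (hP.measure_setOf_exists_apply_eq_le (hab.comp Sum.inl_injective) x) 1
    _ = _ := by rw [← hcompl, ← prob_compl_eq_one_sub .of_discrete, compl_compl]

end IsConjInvariant

end MeasureTheory.Measure

theorem stmt12 {n p : ℕ} (hp : 1 ≤ p) (hn : 2 * p ≤ n)
    (a b : Fin p → Fin n)
    (hinj : Function.Injective (Sum.elim a b : Fin p ⊕ Fin p → Fin n))
    (μ : PMF (Equiv.Perm (Fin n)))
    (hinv : ∀ τ : Equiv.Perm (Fin n), μ.map (fun σ => τ⁻¹ * σ * τ) = μ) :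
    μ.toOuterMeasure {σ | ∀ i : Fin p, σ (a i) = b i}
      ≥ (1 - ((p ^ 2 - p : ℕ) : ℝ≥0∞) / ((n - 1 : ℕ) : ℝ≥0∞)
          - (p : ℝ≥0∞) * μ.toOuterMeasure {σ | σ ⟨0, by omega⟩ = ⟨0, by omega⟩})
        / (((n - p).choose p : ℝ≥0∞) * (p.factorial : ℝ≥0∞)) := by
  let _ : MeasurableSpace (Perm (Fin n)) := ⊤
  have : DiscreteMeasurableSpace (Perm (Fin n)) := ⟨fun _ => trivial⟩
  have hP : μ.toMeasure.IsConjInvariant := fun τ => by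
    rw [PMF.toMeasure_map _ _ .of_discrete, hinv τ]
  have key := hP.one_sub_le_descFactorial_mul_measure hinj ⟨0, by omega⟩
  simp only [Fintype.card_fin, Nat.descFactorial_eq_factorial_mul_choose,
    PMF.toMeasure_apply_eq_toOuterMeasure] at key
  refine ENNReal.div_le_of_le_mul ?_
  exact key.trans_eq (by push_cast; ring)
end
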